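/- There exists an absolute constant C>0 such that for every quadratic polynomial f as in the context and every real u ≥ 2, one has W(u) ≤ C·V(u), i.e. ∏_{p<u, p prime}(1−1/p)(1−χ_Δ(p)/p) ≤ C·∏_{p<u, p prime}(1−ρ(p)/p). -/

import Mathlib

open Finset

noncomputable section

/-- The Kronecker symbol `(D/p)` at a prime `p`. -/
def kroneckerPrime (D : ℤ) (p : ℕ) : ℤ :=
  if p = 2 then (if D % 2 = 0 then 0 else if D % 8 = 1 ∨ D % 8 = 7 then 1 else -1)
  else jacobiSym D p

/-- The Kronecker symbol `χ_D(n) = (D/n)` for `n : ℕ`, extended multiplicatively. -/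
def kronecker (D : ℤ) (n : ℕ) : ℤ :=
  n.factorization.prod fun p k => kroneckerPrime D p ^ k

/-- `L(1, χ_D) = ∑_{n ≥ 1} χ_D(n)/n`, as the limit of its partial sums. -/
def LOne (D : ℤ) : ℝ :=
  Filter.limUnder Filter.atTop fun N : ℕ => ∑ n ∈ Finset.Icc 1 N, (kronecker D n : ℝ) / n

/-- `λ = 1 * χ_D`, i.e. `λ(n) = ∑_{d ∣ n} χ_D(d)`. -/
def lamArith (D : ℤ) (n : ℕ) : ℤ := ∑ d ∈ n.divisors, kronecker D d

/-- The quadratic polynomial `f(n) = a n² + b n + c`. -/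
def fInt (a b c n : ℤ) : ℤ := a * n ^ 2 + b * n + c

/-- `ρ(d) = #{n mod d : f(n) ≡ 0 (mod d)}`. -/
def rho (a b c : ℤ) (d : ℕ) : ℕ :=
  ((Finset.range d).filter fun n : ℕ => (d : ℤ) ∣ fInt a b c (n : ℤ)).card

/-- `A = #𝒜 = #{n ∈ ℤ : 0 ≤ f(n) ≤ N}`. -/
def Acard (a b c N : ℤ) : ℕ := Set.ncard {n : ℤ | 0 ≤ fInt a b c n ∧ fInt a b c n ≤ N}

/-- `A_d = #{n ∈ 𝒜 : d ∣ f(n)}`. -/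
def Adcard (a b c N : ℤ) (d : ℕ) : ℕ :=
  Set.ncard {n : ℤ | 0 ≤ fInt a b c n ∧ fInt a b c n ≤ N ∧ (d : ℤ) ∣ fInt a b c n}

/-- The finset of primes `p < x`. -/
def primesLT (x : ℝ) : Finset ℕ :=
  (Finset.range (Nat.ceil x + 1)).filter fun p => p.Prime ∧ (p : ℝ) < x

/-- `V(x) = ∏_{p < x} (1 - ρ(p)/p)`. -/
def Vprod (a b c : ℤ) (x : ℝ) : ℝ := ∏ p ∈ primesLT x, (1 - (rho a b c p : ℝ) / p)

/-- `W(x) = ∏_{p < x} (1 - 1/p)(1 - χ_D(p)/p)`. -/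
def Wprod (D : ℤ) (x : ℝ) : ℝ :=
  ∏ p ∈ primesLT x, ((1 - 1 / (p : ℝ)) * (1 - (kronecker D p : ℝ) / p))

/-- `P(z) = ∏_{p < z} p`. -/
def Pprod (z : ℝ) : ℕ := ∏ p ∈ primesLT z, p

/-- `S(𝒜, z) = #{n ∈ 𝒜 : gcd(f(n), P(z)) = 1}`. -/
def Ssieve (a b c N : ℤ) (z : ℝ) : ℕ :=
  Set.ncard {n : ℤ | 0 ≤ fInt a b c n ∧ fInt a b c n ≤ N ∧
    Int.gcd (fInt a b c n) (Pprod z) = 1}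

/-- `S(𝒜_p, z) = #{n ∈ 𝒜 : p ∣ f(n), gcd(f(n), P(z)) = 1}`. -/
def SsieveP (a b c N : ℤ) (p : ℕ) (z : ℝ) : ℕ :=
  Set.ncard {n : ℤ | 0 ≤ fInt a b c n ∧ fInt a b c n ≤ N ∧ (p : ℤ) ∣ fInt a b c n ∧
    Int.gcd (fInt a b c n) (Pprod z) = 1}

/-- `π_f(N) = #{n ∈ ℤ : 0 ≤ f(n) ≤ N, f(n) prime}`. -/
def piF (a b c N : ℤ) : ℕ :=
  Set.ncard {n : ℤ | 0 ≤ fInt a b c n ∧ fInt a b c n ≤ N ∧ Prime (fInt a b c n)}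

/-- `δ(x) = ∑_{x ≤ p ≤ A} λ(p)/p`. -/
def deltaSum (a b c N D : ℤ) (x : ℝ) : ℝ :=
  ∑ p ∈ (Finset.range (Acard a b c N + 1)).filter (fun p : ℕ => p.Prime ∧ x ≤ (p : ℝ)),
    (lamArith D p : ℝ) / p

/-- `β = -log(L(1,χ_D) · log|D|)`. -/
def betaE (D : ℤ) : ℝ := - Real.log (LOne D * Real.log |(D : ℝ)|)

/-- `g(Δ) = Δ e^{-β/2}` for `Δ > 0` and `|Δ|/(4|a| - e^{-β/2})` for `Δ < 0`. -/
def gDisc (a D : ℤ) : ℝ :=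
  if 0 < D then (D : ℝ) * Real.exp (-(betaE D) / 2)
  else |(D : ℝ)| / (4 * |(a : ℝ)| - Real.exp (-(betaE D) / 2))


/-!
At an odd prime `p` a quadratic over `𝔽_p` that is not identically zero has at most
`1 + χ(Δ)` roots, so `ρ(p) ≤ 1 + χ_Δ(p)`; at `p = 2` the parity hypothesis gives `ρ(2) ≤ 1`.
Either way the local factors satisfy `(1 - 1/p)(1 - χ_Δ(p)/p) ≤ (1 + 4/p²)(1 - ρ(p)/p)`,
and `∏ (1 + 4/p²) ≤ exp (4 ζ(2))`.
-/

open Finset Real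

theorem card_roots_quadratic_le_one_add_quadraticChar {F : Type*} [Field F] [Fintype F]
    [DecidableEq F] (hF : ringChar F ≠ 2) {a b c : F} (habc : a ≠ 0 ∨ b ≠ 0 ∨ c ≠ 0) :
    ((univ.filter fun x => a * (x * x) + b * x + c = 0).card : ℤ)
      ≤ 1 + quadraticChar F (discrim a b c) := by
  have : NeZero (2 : F) := ⟨Ring.two_ne_zero hF⟩
  by_cases ha : a = 0
  · subst ha
    have hdisc : discrim 0 b c = b ^ 2 := by simp [discrim]
    have hcard : (univ.filter fun x => 0 * (x * x) + b * x + c = 0).card ≤ 1 := by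
      refine card_le_one.mpr fun x hx y hy => ?_
      simp only [mem_filter, mem_univ, true_and, zero_mul, zero_add] at hx hy
      have hb : b ≠ 0 := fun hb => by simp_all
      exact mul_left_cancel₀ hb (by linear_combination hx - hy)
    have hχ : 0 ≤ quadraticChar F (b ^ 2) := by
      by_cases hb : b = 0
      · simp [hb]
      · rw [quadraticChar_sq_one' hb]; norm_num
    rw [hdisc]
    omega
  by_cases hsq : IsSquare (discrim a b c)
  · obtain ⟨s, hs⟩ := hsq
    have hsub : (univ.filter fun x => a * (x * x) + b * x + c = 0)
        ⊆ {(-b + s) / (2 * a), (-b - s) / (2 * a)} := fun x hx => by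
      simp only [mem_filter, mem_univ, true_and] at hx
      simpa using (quadratic_eq_zero_iff ha hs x).mp hx
    by_cases hs0 : s = 0
    · subst hs0
      have := card_le_card hsub
      simp only [add_zero, sub_zero, pair_eq_singleton, card_singleton] at this
      rw [hs, mul_zero, quadraticChar_zero]
      omega
    · have := (card_le_card hsub).trans (card_insert_le _ _)
      rw [hs, quadraticChar_one_iff_isSquare (mul_ne_zero hs0 hs0) |>.mpr ⟨s, rfl⟩]
      simp only [card_singleton] at this
      omega
  · have hempty : (univ.filter fun x => a * (x * x) + b * x + c = 0) = ∅ :=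
      filter_false_of_mem fun x _ =>
        quadratic_ne_zero_of_discrim_ne_sq (fun s hs => hsq ⟨s, by rw [hs, sq]⟩) x
    rw [hempty, quadraticChar_neg_one_iff_not_isSquare.mpr hsq]
    simp

theorem kronecker_of_prime (D : ℤ) {p : ℕ} (hp : p.Prime) :
    kronecker D p = kroneckerPrime D p := by
  rw [kronecker, hp.factorization, Finsupp.prod_single_index (by exact pow_zero _), pow_one]

theorem kronecker_eq_quadraticChar (D : ℤ) {p : ℕ} [Fact p.Prime] (hp2 : p ≠ 2) :
    kronecker D p = quadraticChar (ZMod p) D := by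
  rw [kronecker_of_prime D Fact.out, kroneckerPrime, if_neg hp2,
    ← jacobiSym.legendreSym.to_jacobiSym, legendreSym]

theorem abs_kronecker_le_one (D : ℤ) {p : ℕ} (hp : p.Prime) : |kronecker D p| ≤ 1 := by
  rw [kronecker_of_prime D hp, kroneckerPrime]
  split_ifs
  · norm_num
  · norm_num
  · norm_num
  · rcases jacobiSym.trichotomy D p with h | h | h <;> rw [h] <;> norm_num

theorem rho_le_self (a b c : ℤ) (d : ℕ) : rho a b c d ≤ d :=
  (card_filter_le _ _).trans (card_range d).le

theorem rho_eq_card_roots (a b c : ℤ) (d : ℕ) [NeZero d] :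
    rho a b c d = (univ.filter fun x : ZMod d =>
      (a : ZMod d) * (x * x) + (b : ZMod d) * x + (c : ZMod d) = 0).card := by
  have hcast (n : ℕ) : ((fInt a b c n : ℤ) : ZMod d)
      = (a : ZMod d) * ((n : ZMod d) * (n : ZMod d)) + (b : ZMod d) * n + (c : ZMod d) := by
    simp only [fInt]; push_cast; ring
  refine card_bij' (fun n _ => (n : ZMod d)) (fun x _ => x.val) (fun n hn => ?_)
    (fun x hx => ?_) (fun n hn => ZMod.val_natCast_of_lt (mem_range.mp (mem_filter.mp hn).1))
    (fun x _ => ZMod.natCast_zmod_val x)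
  · simp only [mem_filter, mem_range, mem_univ, true_and] at hn ⊢
    rw [← hcast, ZMod.intCast_zmod_eq_zero_iff_dvd]
    exact hn.2
  · simp only [mem_filter, mem_range, mem_univ, true_and] at hx ⊢
    rw [← ZMod.intCast_zmod_eq_zero_iff_dvd, hcast, ZMod.natCast_zmod_val]
    exact ⟨ZMod.val_lt x, hx⟩

theorem rho_le_one_add_kronecker {a b c D : ℤ} (hD : D = b ^ 2 - 4 * a * c)
    (hg : Int.gcd a (Int.gcd b c) = 1) {p : ℕ} (hp : p.Prime) (hp2 : p ≠ 2) :
    (rho a b c p : ℤ) ≤ 1 + kronecker D p := by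
  have := Fact.mk hp
  have habc : (a : ZMod p) ≠ 0 ∨ (b : ZMod p) ≠ 0 ∨ (c : ZMod p) ≠ 0 := by
    by_contra! h
    simp only [ZMod.intCast_zmod_eq_zero_iff_dvd] at h
    have hdvd := Int.dvd_coe_gcd h.1 (Int.dvd_coe_gcd h.2.1 h.2.2)
    rw [hg, Int.natCast_dvd_natCast, Nat.dvd_one] at hdvd
    exact hp.one_lt.ne' hdvd
  have hdisc : ((D : ℤ) : ZMod p) = discrim (a : ZMod p) b c := by
    rw [hD, discrim]; push_cast; ring
  rw [rho_eq_card_roots, kronecker_eq_quadraticChar D hp2, hdisc]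
  exact card_roots_quadratic_le_one_add_quadraticChar
    ((ZMod.ringChar_zmod_n p).symm ▸ hp2) habc

theorem rho_two_le_one {a b c : ℤ} (hodd : Odd (a + b) ∨ Odd c) : rho a b c 2 ≤ 1 := by
  rw [rho, card_le_one]
  intro x hx y hy
  rw [mem_filter, mem_range, fInt] at hx hy
  obtain ⟨hx2, hxf⟩ := hx
  obtain ⟨hy2, hyf⟩ := hy
  simp only [Int.odd_iff] at hodd
  interval_cases x <;> interval_cases y <;> simp at hxf hyf <;> omega

theorem one_sub_one_div_mul_one_sub_div_le {p ρ χ : ℝ} (hp : 3 ≤ p) (hρχ : ρ ≤ 1 + χ)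
    (hχ : χ ≤ 1) : (1 - 1 / p) * (1 - χ / p) ≤ (1 + 4 / p ^ 2) * (1 - ρ / p) := by
  have hp0 : 0 < p := by linarith
  rw [← sub_nonneg]
  have key : (1 + 4 / p ^ 2) * (1 - ρ / p) - (1 - 1 / p) * (1 - χ / p)
      = ((1 + χ - ρ) * p ^ 2 + (4 - χ) * p - 4 * ρ) / p ^ 3 := by
    field_simp; ring
  rw [key]
  apply div_nonneg _ (by positivity)
  nlinarith

theorem one_sub_kronecker_div_nonneg (D : ℤ) {p : ℕ} (hp : p.Prime) :
    0 ≤ 1 - (kronecker D p : ℝ) / p := by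
  have hχ : (kronecker D p : ℝ) ≤ 1 := by exact_mod_cast (abs_le.mp (abs_kronecker_le_one D hp)).2
  have hp1 : (1 : ℝ) ≤ p := by exact_mod_cast hp.one_le
  rw [sub_nonneg]
  exact div_le_one_of_le₀ (hχ.trans hp1) (by positivity)

theorem one_sub_rho_div_nonneg (a b c : ℤ) (d : ℕ) : 0 ≤ 1 - (rho a b c d : ℝ) / d :=
  sub_nonneg.mpr (div_le_one_of_le₀ (by exact_mod_cast rho_le_self a b c d) d.cast_nonneg)

theorem local_factor_le {a b c D : ℤ} (hD : D = b ^ 2 - 4 * a * c)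
    (hg : Int.gcd a (Int.gcd b c) = 1) (hodd : Odd (a + b) ∨ Odd c) {p : ℕ} (hp : p.Prime) :
    (1 - 1 / (p : ℝ)) * (1 - (kronecker D p : ℝ) / p)
      ≤ (1 + 4 / (p : ℝ) ^ 2) * (1 - (rho a b c p : ℝ) / p) := by
  obtain ⟨hχl, hχu⟩ := abs_le.mp (abs_kronecker_le_one D hp)
  have hχl' : (-1 : ℝ) ≤ kronecker D p := by exact_mod_cast hχl
  have hχu' : (kronecker D p : ℝ) ≤ 1 := by exact_mod_cast hχu
  rcases eq_or_ne p 2 with rfl | hp2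
  · have hρ : (rho a b c 2 : ℝ) ≤ 1 := by exact_mod_cast rho_two_le_one hodd
    norm_num
    linarith
  · have hp3 : (3 : ℝ) ≤ p := by exact_mod_cast (hp.two_le.lt_of_ne' hp2 : 2 < p)
    have hρχ : (rho a b c p : ℝ) ≤ 1 + kronecker D p := by
      exact_mod_cast rho_le_one_add_kronecker hD hg hp hp2
    exact one_sub_one_div_mul_one_sub_div_le hp3 hρχ hχu'

theorem prod_one_add_div_sq_le_exp (s : Finset ℕ) {c : ℝ} (hc : 0 ≤ c) :
    ∏ n ∈ s, (1 + c / (n : ℝ) ^ 2) ≤ exp (c * (π ^ 2 / 6)) := by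
  refine (prod_one_add_le_exp_sum s fun n => by positivity).trans (exp_le_exp.mpr ?_)
  have hζ := hasSum_zeta_two
  calc ∑ n ∈ s, c / (n : ℝ) ^ 2 = c * ∑ n ∈ s, 1 / (n : ℝ) ^ 2 := by
        rw [mul_sum]; simp only [mul_one_div]
    _ ≤ c * (π ^ 2 / 6) := by
        gcongr
        rw [← hζ.tsum_eq]
        exact hζ.summable.sum_le_tsum s fun n _ => by positivity

theorem W_le_V :
    ∃ C > (0:ℝ), ∀ a b c D : ℤ,
      a ≠ 0 → Int.gcd a (Int.gcd b c) = 1 →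
      (Odd (a + b) ∨ Odd c) →
      D = b ^ 2 - 4 * a * c → ¬ IsSquare D →
      ∀ u : ℝ, 2 ≤ u → Wprod D u ≤ C * Vprod a b c u := by
  refine ⟨exp (4 * (π ^ 2 / 6)), exp_pos _, fun a b c D _ hg hodd hD _ u _ => ?_⟩
  have hprime : ∀ p ∈ primesLT u, p.Prime := fun p hp => (mem_filter.mp hp).2.1
  calc Wprod D u
      ≤ ∏ p ∈ primesLT u, ((1 + 4 / (p : ℝ) ^ 2) * (1 - (rho a b c p : ℝ) / p)) :=
        prod_le_prod
          (fun p hp => mul_nonneg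
            (sub_nonneg.mpr (div_le_one_of_le₀ (mod_cast (hprime p hp).one_le) p.cast_nonneg))
            (one_sub_kronecker_div_nonneg D (hprime p hp)))
          (fun p hp => local_factor_le hD hg hodd (hprime p hp))
    _ = (∏ p ∈ primesLT u, (1 + 4 / (p : ℝ) ^ 2)) * Vprod a b c u := prod_mul_distrib
    _ ≤ exp (4 * (π ^ 2 / 6)) * Vprod a b c u :=
        mul_le_mul_of_nonneg_right (prod_one_add_div_sq_le_exp _ (by norm_num))
          (prod_nonneg fun p _ => one_sub_rho_div_nonneg a b c p)
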